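/- Let v be a ℤⁿ-valued valuation on ℂ[x₁,…,xₙ] such that for every finite-dimensional ℂ-subspace L ⊆ ℂ[x₁,…,xₙ], the set v(L \ {0}) has cardinality equal to dim_ℂ L. Let v' on nonzero elements of ℂ[x₁,…,x_{n+1}] be defined by writing f = x_{n+1}^e·g with x_{n+1} not dividing g and setting v'(f) = (v(g|_{x_{n+1}=0}), e). Let I ⊆ ℂ[x₀,…,xₙ] be a homogeneous ideal and I' ⊆ ℂ[x₀,…,x_{n+1}] its extension. Then for every natural number j: v'((I'_j)|_{x₀=1} \ {0}) = ⋃_{i=0}^j ( v((I_i)|_{x₀=1} \ {0}) × {j−i} ) as subsets of ℤⁿ × ℤ. -/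

import Mathlib

/-!
Write a nonzero `f = F|_{x₀=1}`, with `F ∈ I'_j`, as `x_{n+1}^e · g` with `x_{n+1} ∤ g`. Viewed as a
polynomial in `x_{n+1}` over `ℂ[x₀,…,xₙ]`, `F` has all its coefficients in `I` (as `I'` is extended
from `I`), and its coefficient `c` of `x_{n+1}^e` is homogeneous of degree `j - e`; dehomogenizing
commutes with taking coefficients, so `g|_{x_{n+1}=0} = c|_{x₀=1}` and `v' f = (v(c|_{x₀=1}), e)`.
Conversely, for `c ∈ I_i` the element `x_{n+1}^{j-i} · c` of `I'_j` realizes `(v(c|_{x₀=1}), j - i)`.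
-/

open MvPolynomial

/-- The lexicographic linear order on `ℤⁿ`. -/
noncomputable instance lexPiIntLinearOrder (n : ℕ) : LinearOrder (Lex (Fin n → ℤ)) :=
  @Pi.Lex.linearOrder (Fin n) (fun _ => ℤ) Fin.instLinearOrder
    (inferInstanceAs (WellFoundedLT (Fin n))) inferInstance

noncomputable instance lexPiIntMin (n : ℕ) : Min (Lex (Fin n → ℤ)) :=
  @LinearOrder.toMin _ (lexPiIntLinearOrder n)

/-- The degree-`s` homogeneous component of an ideal in `ℂ[x₀,…,xₘ]`,
as a `ℂ`-subspace of the polynomial ring. -/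
noncomputable def idealComponent {m : ℕ} (I : Ideal (MvPolynomial (Fin (m + 1)) ℂ)) (s : ℕ) :
    Submodule ℂ (MvPolynomial (Fin (m + 1)) ℂ) :=
  I.restrictScalars ℂ ⊓ homogeneousSubmodule (Fin (m + 1)) ℂ s

/-- Setting `x₀ = 1`: the dehomogenization map `ℂ[x₀,…,xₘ] → ℂ[x₁,…,xₘ]`. -/
noncomputable def dehom (m : ℕ) : MvPolynomial (Fin (m + 1)) ℂ →ₐ[ℂ] MvPolynomial (Fin m) ℂ :=
  aeval (Fin.cases 1 X)

namespace MvPolynomial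

section LastVariable

variable {R : Type*} [CommSemiring R] {m : ℕ}

variable (R m) in
noncomputable def finSuccEquivLast :
    MvPolynomial (Fin (m + 1)) R ≃ₐ[R] Polynomial (MvPolynomial (Fin m) R) :=
  (renameEquiv R (finRotate (m + 1))).trans (finSuccEquiv R m)

lemma finSuccEquivLast_apply (F : MvPolynomial (Fin (m + 1)) R) :
    finSuccEquivLast R m F = finSuccEquiv R m (rename (finRotate (m + 1)) F) :=
  rfl

@[simp]
lemma finSuccEquivLast_X_last : finSuccEquivLast R m (X (Fin.last m)) = Polynomial.X := by
  simp [finSuccEquivLast, finSuccEquiv_X_zero]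

@[simp]
lemma finSuccEquivLast_X_castSucc (i : Fin m) :
    finSuccEquivLast R m (X i.castSucc) = Polynomial.C (X i) := by
  simp [finSuccEquivLast, finSuccEquiv_X_succ]

@[simp]
lemma finSuccEquivLast_rename_castSucc (p : MvPolynomial (Fin m) R) :
    finSuccEquivLast R m (rename Fin.castSucc p) = Polynomial.C p := by
  induction p using MvPolynomial.induction_on with
  | C c => simp [finSuccEquivLast, finSuccEquiv_apply]
  | add p q hp hq => simp [hp, hq]
  | mul_X p i hp => simp [hp]

lemma aeval_lastCases_zero_eq_eval_zero (g : MvPolynomial (Fin (m + 1)) R) :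
    aeval (Fin.lastCases 0 X) g = (finSuccEquivLast R m g).eval 0 := by
  induction g using MvPolynomial.induction_on with
  | C c => simp [finSuccEquivLast, finSuccEquiv_apply]
  | add p q hp hq => rw [map_add, map_add, Polynomial.eval_add, hp, hq]
  | mul_X p i hp =>
    rw [map_mul, map_mul, Polynomial.eval_mul, hp]
    induction i using Fin.lastCases <;> simp

lemma aeval_lastCases_zero_rename_castSucc (p : MvPolynomial (Fin m) R) :
    aeval (Fin.lastCases 0 X) (rename Fin.castSucc p) = p := by
  rw [aeval_lastCases_zero_eq_eval_zero, finSuccEquivLast_rename_castSucc, Polynomial.eval_C]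

lemma X_last_dvd_iff_aeval_lastCases_zero_eq_zero (g : MvPolynomial (Fin (m + 1)) R) :
    X (Fin.last m) ∣ g ↔
      aeval (Fin.lastCases 0 X : Fin (m + 1) → MvPolynomial (Fin m) R) g = 0 := by
  rw [← map_dvd_iff (finSuccEquivLast R m), finSuccEquivLast_X_last, Polynomial.X_dvd_iff,
    aeval_lastCases_zero_eq_eval_zero, Polynomial.coeff_zero_eq_eval_zero]

lemma coeff_finSuccEquivLast_isHomogeneous {F : MvPolynomial (Fin (m + 1)) R} {j e : ℕ}
    (hF : F.IsHomogeneous j) (he : (finSuccEquivLast R m F).coeff e ≠ 0) :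
    e ≤ j ∧ ((finSuccEquivLast R m F).coeff e).IsHomogeneous (j - e) := by
  rw [finSuccEquivLast_apply] at he ⊢
  set F' := rename (finRotate (m + 1)) F
  have hF' : F'.IsHomogeneous j := hF.rename_isHomogeneous
  have hej : e ≤ j := calc
    e ≤ (finSuccEquiv R m F').natDegree := Polynomial.le_natDegree_of_ne_zero he
    _ = degreeOf 0 F' := natDegree_finSuccEquiv F'
    _ ≤ F'.totalDegree := degreeOf_le_totalDegree F' 0
    _ = j := hF'.totalDegree fun h => he (by rw [h, map_zero, Polynomial.coeff_zero])
  exact ⟨hej, hF'.finSuccEquiv_coeff_isHomogeneous e (j - e) (by omega)⟩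

lemma coeff_finSuccEquivLast_mem_of_mem_map_rename {I : Ideal (MvPolynomial (Fin m) R)}
    {F : MvPolynomial (Fin (m + 1)) R} (hF : F ∈ I.map (rename Fin.castSucc).toRingHom)
    (e : ℕ) : (finSuccEquivLast R m F).coeff e ∈ I := by
  have hC : (finSuccEquivLast R m).toRingHom.comp (rename Fin.castSucc).toRingHom =
      Polynomial.C := RingHom.ext finSuccEquivLast_rename_castSucc
  refine Ideal.mem_map_C_iff.mp ?_ e
  rw [← hC, ← Ideal.map_map]
  exact Ideal.mem_map_of_mem _ hF

end LastVariable

lemma exists_eq_X_last_pow_mul {R : Type*} [CommRing R] {m : ℕ}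
    {f : MvPolynomial (Fin (m + 1)) R} (hf : f ≠ 0) :
    ∃ (e : ℕ) (g : MvPolynomial (Fin (m + 1)) R), ¬ X (Fin.last m) ∣ g ∧
      f = X (Fin.last m) ^ e * g ∧
      aeval (Fin.lastCases 0 X) g = (finSuccEquivLast R m f).coeff e := by
  set p := finSuccEquivLast R m f
  obtain ⟨q, hpq, hq⟩ := p.exists_eq_pow_rootMultiplicity_mul_and_not_dvd
    ((map_ne_zero_iff _ (finSuccEquivLast R m).injective).mpr hf) 0
  simp only [map_zero, sub_zero] at hpq hq
  set e := p.rootMultiplicity 0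
  refine ⟨e, (finSuccEquivLast R m).symm q, ?_, ?_, ?_⟩
  · rwa [← map_dvd_iff (finSuccEquivLast R m), finSuccEquivLast_X_last,
      AlgEquiv.apply_symm_apply]
  · apply (finSuccEquivLast R m).injective
    simp [← hpq, p]
  · rw [aeval_lastCases_zero_eq_eval_zero, AlgEquiv.apply_symm_apply, hpq,
      Polynomial.coeff_X_pow_mul', if_pos le_rfl, Nat.sub_self,
      Polynomial.coeff_zero_eq_eval_zero]

end MvPolynomial

section Dehomogenization

variable {m : ℕ}

lemma dehom_X_last : dehom (m + 1) (X (Fin.last (m + 1))) = X (Fin.last m) := by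
  rw [dehom, aeval_X, ← Fin.succ_last, Fin.cases_succ]

lemma dehom_rename_castSucc (p : MvPolynomial (Fin (m + 1)) ℂ) :
    dehom (m + 1) (rename Fin.castSucc p) = rename Fin.castSucc (dehom m p) := by
  have h : (dehom (m + 1)).comp (rename Fin.castSucc) = (rename Fin.castSucc).comp (dehom m) :=
    algHom_ext fun i => by cases i using Fin.cases <;> simp [dehom]
  exact AlgHom.congr_fun h p

lemma finSuccEquivLast_dehom (F : MvPolynomial (Fin (m + 2)) ℂ) :
    finSuccEquivLast ℂ m (dehom (m + 1) F) = (finSuccEquivLast ℂ (m + 1) F).map (dehom m) := by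
  have h : (finSuccEquivLast ℂ m).toAlgHom.comp (dehom (m + 1)) =
      (Polynomial.mapAlgHom (dehom m)).comp (finSuccEquivLast ℂ (m + 1)).toAlgHom := by
    refine algHom_ext fun i => ?_
    cases i using Fin.lastCases with
    | last => simp [dehom_X_last]
    | cast i =>
      have hXi := dehom_rename_castSucc (X i)
      rw [rename_X] at hXi
      simp [hXi]
  exact AlgHom.congr_fun h F

lemma X_last_pow_mul_rename_mem_idealComponent {I : Ideal (MvPolynomial (Fin (m + 1)) ℂ)}
    {i j : ℕ} {c : MvPolynomial (Fin (m + 1)) ℂ} (hc : c ∈ idealComponent I i) (hij : i ≤ j) :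
    X (Fin.last (m + 1)) ^ (j - i) * rename Fin.castSucc c ∈
      idealComponent (I.map (rename Fin.castSucc).toRingHom) j := by
  have hhom := (isHomogeneous_X_pow (R := ℂ) (Fin.last (m + 1)) (j - i)).mul
    (hc.2.rename_isHomogeneous (f := Fin.castSucc))
  rw [Nat.sub_add_cancel hij] at hhom
  exact ⟨Ideal.mul_mem_left _ _ (Ideal.mem_map_of_mem _ hc.1), hhom⟩

lemma coeff_finSuccEquivLast_mem_idealComponent {I : Ideal (MvPolynomial (Fin (m + 1)) ℂ)}
    {j e : ℕ} {F : MvPolynomial (Fin (m + 2)) ℂ}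
    (hF : F ∈ idealComponent (I.map (rename Fin.castSucc).toRingHom) j)
    (he : (finSuccEquivLast ℂ (m + 1) F).coeff e ≠ 0) :
    e ≤ j ∧ (finSuccEquivLast ℂ (m + 1) F).coeff e ∈ idealComponent I (j - e) := by
  obtain ⟨hej, hhom⟩ := coeff_finSuccEquivLast_isHomogeneous hF.2 he
  exact ⟨hej, coeff_finSuccEquivLast_mem_of_mem_map_rename hF.1 e, hhom⟩

end Dehomogenization

theorem valuation_image_extension_component_general (n : ℕ)
    (v : MvPolynomial (Fin n) ℂ → Lex (Fin n → ℤ))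
    (v' : MvPolynomial (Fin (n + 1)) ℂ → (Fin n → ℤ) × ℤ)
    (hv'_def : ∀ (e : ℕ) (g : MvPolynomial (Fin (n + 1)) ℂ),
      ¬ (X (Fin.last n) ∣ g) →
      v' (X (Fin.last n) ^ e * g) =
        (ofLex (v (aeval (Fin.lastCases 0 X) g)), (e : ℤ)))
    (I : Ideal (MvPolynomial (Fin (n + 1)) ℂ))
    (I' : Ideal (MvPolynomial (Fin (n + 2)) ℂ))
    (hI' : I' = Ideal.map (rename (Fin.castSucc : Fin (n + 1) → Fin (n + 2))).toRingHom I)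
    (j : ℕ) :
    v' '' ((⇑(dehom (n + 1)) ''
        ((idealComponent I' j : Set (MvPolynomial (Fin (n + 2)) ℂ)))) \ {0}) =
      ⋃ i ∈ Set.Iic j,
        ((fun f => ofLex (v f)) ''
            ((⇑(dehom n) '' ((idealComponent I i : Set (MvPolynomial (Fin (n + 1)) ℂ)))) \ {0}))
          ×ˢ {((j - i : ℕ) : ℤ)} := by
  subst hI'
  ext ⟨a, k⟩
  simp only [Set.mem_image, Set.mem_sdiff, Set.mem_singleton_iff, Set.mem_iUnion,
    Set.mem_Iic, Set.mem_prod, exists_prop]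
  constructor
  · rintro ⟨f, ⟨⟨F, hF, rfl⟩, hf0⟩, hfv⟩
    obtain ⟨e, g, hg, hfg, hgc⟩ := exists_eq_X_last_pow_mul hf0
    rw [finSuccEquivLast_dehom, Polynomial.coeff_map, RingHom.coe_coe] at hgc
    have hc0 := hgc ▸ (X_last_dvd_iff_aeval_lastCases_zero_eq_zero g).not.mp hg
    obtain ⟨hej, hc⟩ := coeff_finSuccEquivLast_mem_idealComponent hF fun h => hc0 (by
      rw [h, map_zero])
    rw [hfg, hv'_def e g hg, hgc, Prod.mk.injEq] at hfv
    refine ⟨j - e, by omega, ⟨_, ⟨⟨_, hc, rfl⟩, hc0⟩, hfv.1⟩, ?_⟩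
    rw [← hfv.2, Nat.sub_sub_self hej]
  · rintro ⟨i, hij, ⟨_, ⟨⟨c, hc, rfl⟩, hc0⟩, rfl⟩, rfl⟩
    have hg : ¬ X (Fin.last n) ∣ rename Fin.castSucc (dehom n c) := by
      rwa [X_last_dvd_iff_aeval_lastCases_zero_eq_zero, aeval_lastCases_zero_rename_castSucc]
    have hdehom : dehom (n + 1) (X (Fin.last (n + 1)) ^ (j - i) * rename Fin.castSucc c) =
        X (Fin.last n) ^ (j - i) * rename Fin.castSucc (dehom n c) := by
      rw [map_mul, map_pow, dehom_X_last, dehom_rename_castSucc]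
    refine ⟨_, ⟨⟨_, X_last_pow_mul_rename_mem_idealComponent hc hij, hdehom⟩, ?_⟩, ?_⟩
    · exact mul_ne_zero (pow_ne_zero _ (X_ne_zero _)) fun h => hg (h ▸ dvd_zero _)
    · rw [hv'_def _ _ hg, aeval_lastCases_zero_rename_castSucc]

/-- Let `v` be a `ℤⁿ`-valued valuation on `ℂ[x₁,…,xₙ]` with
`#v(L∖{0}) = dim L` for all finite-dimensional subspaces `L`, let `v'` be its extension to
`ℂ[x₁,…,x_{n+1}]` defined by `v'(x_{n+1}^e·g) = (v(g|_{x_{n+1}=0}), e)` for `x_{n+1} ∤ g`,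
and let `I' ⊆ ℂ[x₀,…,x_{n+1}]` be the extension of a homogeneous ideal
`I ⊆ ℂ[x₀,…,xₙ]`. Then for every `j`:
`v'((I'_j)|_{x₀=1} ∖ {0}) = ⋃_{i=0}^j ( v((I_i)|_{x₀=1} ∖ {0}) × {j−i} )`. -/
theorem valuation_image_extension_component (n : ℕ)
    (v : MvPolynomial (Fin n) ℂ → Lex (Fin n → ℤ))
    (hv_mul : ∀ f g : MvPolynomial (Fin n) ℂ, f ≠ 0 → g ≠ 0 → v (f * g) = v f + v g)
    (hv_add : ∀ f g : MvPolynomial (Fin n) ℂ, f ≠ 0 → g ≠ 0 → f + g ≠ 0 →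
      min (v f) (v g) ≤ v (f + g))
    (hv_const : ∀ c : ℂ, c ≠ 0 → v (C c) = 0)
    (hv_card : ∀ L : Submodule ℂ (MvPolynomial (Fin n) ℂ), FiniteDimensional ℂ L →
      (v '' ((L : Set (MvPolynomial (Fin n) ℂ)) \ {0})).ncard = Module.finrank ℂ L)
    (v' : MvPolynomial (Fin (n + 1)) ℂ → (Fin n → ℤ) × ℤ)
    (hv'_def : ∀ (e : ℕ) (g : MvPolynomial (Fin (n + 1)) ℂ),
      ¬ (X (Fin.last n) ∣ g) →
      v' (X (Fin.last n) ^ e * g) =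
        (ofLex (v (aeval (Fin.lastCases 0 X) g)), (e : ℤ)))
    (I : Ideal (MvPolynomial (Fin (n + 1)) ℂ))
    (hI : ∃ S : Set (MvPolynomial (Fin (n + 1)) ℂ),
      (∀ f ∈ S, ∃ e : ℕ, f.IsHomogeneous e) ∧ I = Ideal.span S)
    (I' : Ideal (MvPolynomial (Fin (n + 2)) ℂ))
    (hI' : I' = Ideal.map (rename (Fin.castSucc : Fin (n + 1) → Fin (n + 2))).toRingHom I)
    (j : ℕ) :
    v' '' ((⇑(dehom (n + 1)) ''
        ((idealComponent I' j : Set (MvPolynomial (Fin (n + 2)) ℂ)))) \ {0}) =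
      ⋃ i ∈ Set.Iic j,
        ((fun f => ofLex (v f)) ''
            ((⇑(dehom n) '' ((idealComponent I i : Set (MvPolynomial (Fin (n + 1)) ℂ)))) \ {0}))
          ×ˢ {((j - i : ℕ) : ℤ)} :=
  valuation_image_extension_component_general n v v' hv'_def I I' hI' j
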